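/- For every β ∈ (0,1] there exists a constant C_β > 0 such that Σ_{m=1}^∞ x^m / Γ(mβ) ≤ C_β · x · e^{2 x^{1/β}} for all x ≥ 0, where Γ is the Gamma function. -/

import Mathlib

/-!
Truncating the Gamma integral at `t` and using `e^{-u} ≥ e^{-t}` there gives
`e^{-t} t^s ≤ s Γ(s)`. With `y = x^{1/β}`, `s = nβ ≥ β` and `t = 2(y + 1)`, together with
`y^s ≤ y^β (y + 1)^s`, this bounds the `n`-th term by `e² β n 2^{-nβ} · x e^{2y}`;
the series `Σ n 2^{-nβ}` is arithmetico-geometric.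
-/

open Real MeasureTheory Set

namespace Real

theorem exp_neg_mul_rpow_le_mul_Gamma {s t : ℝ} (hs : 0 < s) (ht : 0 ≤ t) :
    exp (-t) * t ^ s ≤ s * Gamma s := by
  have hint : IntegrableOn (fun u => exp (-u) * u ^ (s - 1)) (Ioi 0) :=
    GammaIntegral_convergent hs
  have hpow : ∫ u in Ioc 0 t, u ^ (s - 1) = t ^ s / s := by
    rw [← intervalIntegral.integral_of_le ht,
      integral_rpow (Or.inl (by linarith)), sub_add_cancel, zero_rpow hs.ne', sub_zero]
  rw [← div_le_iff₀' hs, mul_div_assoc, ← hpow, ← integral_const_mul, Gamma_eq_integral hs]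
  calc ∫ u in Ioc 0 t, exp (-t) * u ^ (s - 1)
      ≤ ∫ u in Ioc 0 t, exp (-u) * u ^ (s - 1) := by
        refine setIntegral_mono_on ?_ (hint.mono_set Ioc_subset_Ioi_self) measurableSet_Ioc
          fun u hu => ?_
        · exact (intervalIntegral.intervalIntegrable_rpow'
            (by linarith : -1 < s - 1)).1.const_mul _
        · gcongr
          exacts [rpow_nonneg hu.1.le _, hu.2]
    _ ≤ ∫ u in Ioi 0, exp (-u) * u ^ (s - 1) :=
        setIntegral_mono_set hint
          (ae_restrict_of_forall_mem measurableSet_Ioi fun u hu =>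
            mul_nonneg (exp_pos _).le (rpow_nonneg (le_of_lt hu) _))
          Ioc_subset_Ioi_self.eventuallyLE

theorem rpow_div_Gamma_le {β s y : ℝ} (hβ : 0 < β) (hβs : β ≤ s) (hy : 0 ≤ y) :
    y ^ s / Gamma s ≤ exp 2 * (s / 2 ^ s) * (y ^ β * exp (2 * y)) := by
  have hs : 0 < s := hβ.trans_le hβs
  have hsplit : y ^ s ≤ y ^ β * (y + 1) ^ s :=
    calc y ^ s = y ^ β * y ^ (s - β) := by
          rw [← rpow_add' hy (by linarith), add_sub_cancel]
      _ ≤ y ^ β * (y + 1) ^ (s - β) := by gcongr; linarith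
      _ ≤ y ^ β * (y + 1) ^ s := by gcongr <;> linarith
  have hGamma : (2 * (y + 1)) ^ s ≤ s * Gamma s * exp (2 * (y + 1)) := by
    rw [← div_le_iff₀ (exp_pos _), div_eq_inv_mul, ← exp_neg]
    exact exp_neg_mul_rpow_le_mul_Gamma hs (by linarith)
  rw [div_le_iff₀ (Gamma_pos_of_pos hs)]
  calc y ^ s ≤ y ^ β * (2 * (y + 1)) ^ s / 2 ^ s := by
        rwa [mul_rpow zero_le_two (by linarith), mul_div_assoc, mul_div_cancel_left₀ _
          (rpow_pos_of_pos two_pos s).ne']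
    _ ≤ y ^ β * (s * Gamma s * exp (2 * (y + 1))) / 2 ^ s := by gcongr
    _ = exp 2 * (s / 2 ^ s) * (y ^ β * exp (2 * y)) * Gamma s := by
        rw [mul_add_one, exp_add]; ring

theorem pow_div_Gamma_natCast_mul_le {β x : ℝ} (hβ : 0 < β) (hx : 0 ≤ x) {n : ℕ}
    (hn : 1 ≤ n) :
    x ^ n / Gamma (n * β) ≤
      exp 2 * β * (n * (2 ^ β)⁻¹ ^ n) * (x * exp (2 * x ^ (1 / β))) := by
  rw [one_div]
  set y := x ^ β⁻¹
  have hy : 0 ≤ y := rpow_nonneg hx _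
  have hyβ : y ^ β = x := rpow_inv_rpow hx hβ.ne'
  have hxn : x ^ n = y ^ (n * β) := by rw [mul_comm, rpow_mul_natCast hy, hyβ]
  have htwo_pow : (2 : ℝ) ^ (n * β) = (2 ^ β) ^ n := by
    rw [mul_comm, rpow_mul_natCast zero_le_two]
  have hβn : β ≤ n * β := le_mul_of_one_le_left hβ.le (by exact_mod_cast hn)
  rw [hxn, ← hyβ]
  refine (rpow_div_Gamma_le hβ hβn hy).trans_eq ?_
  rw [htwo_pow, inv_pow]
  ring

end Real

theorem stmt7_general (β : ℝ) (hβ0 : 0 < β) :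
    ∃ C > (0 : ℝ), ∀ x : ℝ, 0 ≤ x →
      (∑' m : ℕ, x ^ (m + 1) / Real.Gamma ((m + 1 : ℕ) * β)) ≤
        C * x * Real.exp (2 * x ^ (1 / β)) := by
  set q : ℝ := (2 ^ β)⁻¹
  have hq0 : 0 < q := by positivity
  have hq1 : q < 1 := inv_lt_one_of_one_lt₀ (one_lt_rpow one_lt_two hβ0)
  have hgeom : HasSum (fun m : ℕ => ((m + 1 : ℕ) : ℝ) * q ^ (m + 1)) (q / (1 - q) ^ 2) := by
    have := (hasSum_nat_add_iff' 1).mpr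
      (hasSum_coe_mul_geometric_of_norm_lt_one (r := q) (by rwa [norm_of_nonneg hq0.le]))
    simpa only [Finset.sum_range_one, Nat.cast_zero, zero_mul, sub_zero] using this
  refine ⟨exp 2 * β * (q / (1 - q) ^ 2), by have := sub_pos.2 hq1; positivity, fun x hx => ?_⟩
  have hterm (m : ℕ) := pow_div_Gamma_natCast_mul_le hβ0 hx (n := m + 1) le_add_self
  have hmajorant := (hgeom.mul_left (exp 2 * β)).mul_right (x * exp (2 * x ^ (1 / β)))
  have hsummable := hmajorant.summable.of_nonneg_of_le
    (fun m => div_nonneg (by positivity) (Gamma_pos_of_pos (by positivity)).le) hterm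
  rw [mul_assoc _ x]
  exact hasSum_le hterm hsummable.hasSum hmajorant

/-- For every `β ∈ (0,1]` there is `C_β > 0` with
`Σ_{m=1}^∞ x^m / Γ(mβ) ≤ C_β x e^{2 x^{1/β}}` for all `x ≥ 0`. -/
theorem stmt7 (β : ℝ) (hβ0 : 0 < β) (hβ1 : β ≤ 1) :
    ∃ C > (0 : ℝ), ∀ x : ℝ, 0 ≤ x →
      (∑' m : ℕ, x ^ (m + 1) / Real.Gamma ((m + 1 : ℕ) * β)) ≤
        C * x * Real.exp (2 * x ^ (1 / β)) :=
  stmt7_general β hβ0
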